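/- arXiv:1409.4912 — 6 statements merged into one kernel-verified Lean document; each statement's English description precedes it below -/
import Mathlib

section
/- For every real ε > 0 there exists a real x₀ such that for all real x ≥ x₀ there exists a positive integer m with the following properties: φ(m) ≤ x; m = 2^t · Q for some nonnegative integer t and some odd squarefree positive integer Q; and m ≥ ((1/2)·e^γ − ε) · x · log log x. -/
/-!
Take `m = 2^(t+1) Q` with `Q` the product of the odd primes below `n` other than one prime `p`.
Then `m / φ(m) = ∏_{q < n, q ≠ p} (1 - 1/q)⁻¹ ≥ (1 - 1/p) log n`, since the full product is the sum
of `1/k` over the `n`-smooth `k`, which contains the harmonic sum `H_{n-1} ≥ log n`. For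
`n = ⌊(log x)/2⌋` the totient `∏_{q < n} (q - 1)` of the primorial is at most `4^n ≤ x`, and
`φ(m) = 2^t ∏_{q < n} (q - 1) / (p - 1)`. Letting `p` run over ten primes whose values `p - 1` climb
from `546` to `2 · 546` in steps of ratio at most `12/11`, one can choose `t` and `p` with
`11x/12 ≤ φ(m) ≤ x`. This gives `m ≥ (11/12)(546/547) x log n ≥ (10/11) x (log log x - 2)`, and
`10/11 > e^γ/2` because `γ < H₃₂ - log 32 < log 2 - 1/10`.
-/

open Real Finset

theorem eulerMascheroniConstant_lt_log_two_sub : eulerMascheroniConstant < log 2 - 1 / 10 := by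
  have h := eulerMascheroniConstant_lt_eulerMascheroniSeq' 32
  have hH : (harmonic 32 : ℝ) < 40585 / 10000 := by
    have : harmonic 32 < 40585 / 10000 := by norm_num [harmonic, sum_range_succ]
    have hc := (Rat.cast_lt (K := ℝ)).mpr this
    rwa [Rat.cast_div, Rat.cast_ofNat, Rat.cast_ofNat] at hc
  have h32 : log (32 : ℕ) = 5 * log 2 := by
    rw [show ((32 : ℕ) : ℝ) = 2 ^ 5 by norm_num, log_pow]; norm_num
  rw [eulerMascheroniSeq', if_neg (by norm_num), h32] at h
  linarith [log_two_gt_d9]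

theorem exp_eulerMascheroniConstant_le : exp eulerMascheroniConstant ≤ 20 / 11 := by
  calc exp eulerMascheroniConstant ≤ exp (log 2 - 1 / 10) :=
        exp_le_exp.mpr eulerMascheroniConstant_lt_log_two_sub.le
    _ = 2 / exp (1 / 10) := by rw [exp_sub, exp_log two_pos]
    _ ≤ 2 / (1 / 10 + 1) := by gcongr; exact add_one_le_exp _
    _ = 20 / 11 := by norm_num

theorem log_le_prod_primesBelow (N : ℕ) :
    log N ≤ ∏ p ∈ N.primesBelow, (1 - (p : ℝ)⁻¹)⁻¹ := by
  obtain _ | n := N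
  · simp
  let f : ℕ →* ℝ := invMonoidHom.comp (Nat.castRingHom ℝ : ℕ →* ℝ)
  have hf (k : ℕ) : f k = (k : ℝ)⁻¹ := rfl
  have hf_prime {p : ℕ} (hp : p.Prime) : ‖f p‖ < 1 := by
    rw [hf, norm_inv, Real.norm_natCast]
    exact inv_lt_one_of_one_lt₀ (by exact_mod_cast hp.one_lt)
  have hsum :=
    (EulerProduct.summable_and_hasSum_smoothNumbers_prod_primesBelow_geometric hf_prime (n + 1)).2
  have hsmooth : ∀ k ∈ Icc 1 n, k ∈ (n + 1).smoothNumbers := fun k hk =>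
    Nat.mem_smoothNumbers_of_lt (mem_Icc.mp hk).1 (Nat.lt_succ_of_le (mem_Icc.mp hk).2)
  calc log ↑(n + 1) ≤ harmonic n := log_add_one_le_harmonic n
    _ = ∑ k ∈ Icc 1 n, f k := by simp [harmonic_eq_sum_Icc, hf]
    _ = ∑ k ∈ (Icc 1 n).subtype (· ∈ (n + 1).smoothNumbers), f k := by
      rw [sum_subtype_eq_sum_filter, filter_true_of_mem hsmooth]
    _ ≤ _ := by simpa only [hf] using sum_le_hasSum _ (fun k _ => by simp [hf]) hsum

theorem mul_log_le_prod_primesBelow_erase {n p : ℕ} (hp : p ∈ n.primesBelow) :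
    (1 - (p : ℝ)⁻¹) * log n ≤ ∏ q ∈ n.primesBelow.erase p, (1 - (q : ℝ)⁻¹)⁻¹ := by
  have hp1 : (0 : ℝ) < 1 - (p : ℝ)⁻¹ := sub_pos.mpr
    (inv_lt_one_of_one_lt₀ (by exact_mod_cast (Nat.prime_of_mem_primesBelow hp).one_lt))
  calc (1 - (p : ℝ)⁻¹) * log n ≤ (1 - (p : ℝ)⁻¹) * ∏ q ∈ n.primesBelow, (1 - (q : ℝ)⁻¹)⁻¹ :=
        mul_le_mul_of_nonneg_left (log_le_prod_primesBelow n) hp1.le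
    _ = _ := by rw [← mul_prod_erase _ _ hp, ← mul_assoc, mul_inv_cancel₀ hp1.ne', one_mul]

theorem Nat.cast_totient_eq_mul_prod (n : ℕ) :
    (n.totient : ℝ) = n * ∏ p ∈ n.primeFactors, (1 - (p : ℝ)⁻¹) := by
  have h := congrArg (Rat.cast (K := ℝ)) (Nat.totient_eq_mul_prod_factors n)
  push_cast at h
  exact h

theorem Nat.cast_eq_totient_mul_prod (n : ℕ) :
    (n : ℝ) = n.totient * ∏ p ∈ n.primeFactors, (1 - (p : ℝ)⁻¹)⁻¹ := by
  have hprod : ∏ p ∈ n.primeFactors, (1 - (p : ℝ)⁻¹) ≠ 0 :=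
    prod_ne_zero_iff.mpr fun p hp => sub_ne_zero.mpr
      (inv_ne_one.mpr (by exact_mod_cast (Nat.prime_of_mem_primeFactors hp).ne_one)).symm
  rw [Nat.cast_totient_eq_mul_prod, prod_inv_distrib, mul_inv_cancel_right₀ hprod]

section OddPrimes

variable {S : Finset ℕ} (hS : ∀ p ∈ S, p.Prime)
include hS

theorem squarefree_prod_of_forall_prime : Squarefree (∏ p ∈ S, p) :=
  squarefree_prod_of_pairwise_isCoprime
    (fun p hp q hq hpq => Nat.coprime_iff_isRelPrime.mp
      ((Nat.coprime_primes (hS p hp) (hS q hq)).mpr hpq))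
    fun p hp => (hS p hp).squarefree

theorem odd_prod_of_forall_prime (h2 : 2 ∉ S) : Odd (∏ p ∈ S, p) :=
  prod_induction _ Odd (fun _ _ => Odd.mul) odd_one
    fun p hp => (hS p hp).odd_of_ne_two (ne_of_mem_of_not_mem hp h2)

theorem primeFactors_two_pow_mul_prod (t : ℕ) :
    (2 ^ (t + 1) * ∏ p ∈ S, p).primeFactors = insert 2 S := by
  rw [Nat.primeFactors_mul (by positivity) (prod_ne_zero_iff.mpr fun p hp => (hS p hp).ne_zero),
    Nat.primeFactors_prime_pow t.succ_ne_zero Nat.prime_two, Nat.primeFactors_prod hS]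
  rfl

theorem totient_two_pow_mul_prod (h2 : 2 ∉ S) (t : ℕ) :
    ((2 ^ (t + 1) * ∏ p ∈ S, p).totient : ℝ) = 2 ^ t * ∏ p ∈ insert 2 S, ((p : ℝ) - 1) := by
  have hsub (p : ℕ) (hp : p.Prime) : (p : ℝ) * (1 - (p : ℝ)⁻¹) = p - 1 := by
    have : (p : ℝ) ≠ 0 := by exact_mod_cast hp.ne_zero
    field_simp
  rw [Nat.cast_totient_eq_mul_prod, primeFactors_two_pow_mul_prod hS, prod_insert h2,
    prod_insert h2]
  push_cast
  rw [← prod_congr rfl fun p hp => hsub p (hS p hp), prod_mul_distrib]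
  ring

end OddPrimes

theorem exists_mem_ge_le_mul_of_isChain {r : ℝ} (hr : 1 ≤ r) :
    ∀ {a : ℝ} {l : List ℝ}, 0 ≤ a → (a :: l).IsChain (fun u v => u ≤ v ∧ v ≤ r * u) →
      ∀ w, a ≤ w → w ≤ (a :: l).getLast (List.cons_ne_nil a l) →
        ∃ d ∈ a :: l, w ≤ d ∧ d ≤ r * w
  | a, [], ha, _, w, haw, hwa => ⟨a, List.mem_singleton_self a, hwa, by nlinarith⟩
  | a, b :: l, ha, hchain, w, haw, hwl => by
    obtain ⟨⟨hab, hba⟩, hchain⟩ := List.isChain_cons_cons.mp hchain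
    by_cases hwb : w ≤ b
    · exact ⟨b, by simp, hwb, hba.trans (by nlinarith)⟩
    · obtain ⟨d, hd, hwd⟩ := exists_mem_ge_le_mul_of_isChain hr (ha.trans hab) hchain w
        (le_of_not_ge hwb) (by simpa using hwl)
      exact ⟨d, List.mem_cons_of_mem a hd, hwd⟩

theorem exists_two_pow_div_mem_Icc {r a R : ℝ} {l : List ℝ} (hr : 1 ≤ r) (ha : 0 < a)
    (hchain : (a :: l).IsChain (fun u v => u ≤ v ∧ v ≤ r * u))
    (hlast : (a :: l).getLast (List.cons_ne_nil a l) = 2 * a) (hR : 1 ≤ 2 * a * R) :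
    ∃ t : ℕ, ∃ d ∈ a :: l, 2 ^ t / d ∈ Set.Icc (R / r) R := by
  obtain ⟨t, hlo, hhi⟩ := exists_nat_pow_near hR one_lt_two
  have hR0 : 0 < R := by nlinarith
  obtain ⟨d, hd, hwd, hdw⟩ := exists_mem_ge_le_mul_of_isChain hr ha.le hchain (2 ^ t / R)
    (by rw [le_div_iff₀ hR0, ← mul_le_mul_iff_of_pos_left two_pos, ← pow_succ']; linarith)
    (by rw [hlast, div_le_iff₀ hR0]; linarith)
  have hd0 : 0 < d := lt_of_lt_of_le (by positivity) hwd
  refine ⟨t, d, hd, ?_, ?_⟩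
  · rw [div_le_div_iff₀ (by positivity) hd0]
    rw [mul_div_assoc', le_div_iff₀ hR0] at hdw
    linarith
  · rw [div_le_iff₀ hd0]
    rwa [div_le_iff₀ hR0, mul_comm] at hwd

def gridPrimes : List ℕ := [547, 593, 643, 701, 761, 829, 887, 967, 1051, 1093]

theorem prime_and_mem_Icc_of_mem_gridPrimes : ∀ p ∈ gridPrimes, p.Prime ∧ p ∈ Set.Icc 547 1093 := by
  simp only [gridPrimes, List.forall_mem_cons, List.not_mem_nil, IsEmpty.forall_iff,
    implies_true, and_true]
  norm_num

theorem exists_two_pow_div_gridPrimes_mem_Icc {R : ℝ} (hR : 1 ≤ R) :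
    ∃ t : ℕ, ∃ p ∈ gridPrimes, 2 ^ t / ((p : ℝ) - 1) ∈ Set.Icc (11 / 12 * R) R := by
  obtain ⟨t, d, hd, hlo, hhi⟩ := exists_two_pow_div_mem_Icc (r := 12 / 11)
    (a := ((547 : ℕ) : ℝ) - 1) (l := gridPrimes.tail.map fun p : ℕ => (p : ℝ) - 1) (R := R)
    (by norm_num) (by norm_num)
    (by simp only [gridPrimes, List.tail_cons, List.map_cons, List.map_nil,
          List.isChain_cons_cons, List.IsChain.singleton, and_true]; norm_num)
    (by simp [gridPrimes]; norm_num) (by norm_num; linarith)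
  obtain ⟨p, hp, rfl⟩ := List.mem_map.mp (show d ∈ gridPrimes.map fun p : ℕ => (p : ℝ) - 1 from hd)
  exact ⟨t, p, hp, (by ring : 11 / 12 * R = R / (12 / 11)).trans_le hlo, hhi⟩

theorem log_four_le_two : log 4 ≤ 2 := by
  rw [log_le_iff_le_exp (by norm_num), show (2 : ℝ) = 1 + 1 by norm_num, exp_add]
  nlinarith [add_one_le_exp 1]

theorem four_pow_floor_log_div_two_le {x : ℝ} (hx : 1 ≤ x) : (4 : ℝ) ^ ⌊log x / 2⌋₊ ≤ x := by
  calc (4 : ℝ) ^ ⌊log x / 2⌋₊ = exp (⌊log x / 2⌋₊ * log 4) := by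
        rw [exp_nat_mul, exp_log (by norm_num)]
    _ ≤ exp (log x) := by
        gcongr
        nlinarith [Nat.floor_le (div_nonneg (log_nonneg hx) zero_le_two), log_four_le_two,
          (Nat.cast_nonneg _ : (0 : ℝ) ≤ ⌊log x / 2⌋₊)]
    _ = x := exp_log (by linarith)

theorem log_log_sub_two_le_log_floor {x : ℝ} (hx : 4 ≤ log x) :
    log (log x) - 2 ≤ log ⌊log x / 2⌋₊ := by
  have hn : log x / 4 ≤ ⌊log x / 2⌋₊ := by
    linarith [Nat.lt_floor_add_one (log x / 2)]
  calc log (log x) - 2 ≤ log (log x) - log 4 := by linarith [log_four_le_two]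
    _ = log (log x / 4) := (log_div (by linarith) (by norm_num)).symm
    _ ≤ log ⌊log x / 2⌋₊ := log_le_log (by linarith) hn

theorem prod_primesBelow_sub_one_le_four_pow (n : ℕ) :
    ∏ q ∈ n.primesBelow, ((q : ℝ) - 1) ≤ 4 ^ n := by
  calc ∏ q ∈ n.primesBelow, ((q : ℝ) - 1) ≤ ∏ q ∈ n.primesBelow, (q : ℝ) :=
        prod_le_prod (fun q hq => sub_nonneg.mpr
          (by exact_mod_cast (Nat.prime_of_mem_primesBelow hq).one_le)) fun q _ => by linarith
    _ = ((∏ q ∈ n.primesBelow, q : ℕ) : ℝ) := (Nat.cast_prod _ _).symm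
    _ ≤ (primorial n : ℕ) := Nat.cast_le.mpr <|
        prod_le_prod_of_subset_of_one_le' (Nat.primesBelow_mono (by omega : n ≤ n + 1))
          fun q hq _ => (Nat.prime_of_mem_primesBelow hq).one_le
    _ ≤ 4 ^ n := by exact_mod_cast primorial_le_four_pow n

section PrimesBelowErase

variable {n p : ℕ} (hp : p ∈ n.primesBelow) (h2 : 2 ∈ n.primesBelow.erase p)

theorem prime_of_mem_primesBelow_erase_erase :
    ∀ q ∈ (n.primesBelow.erase p).erase 2, q.Prime :=
  fun _ hq => Nat.prime_of_mem_primesBelow (mem_of_mem_erase (mem_of_mem_erase hq))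

include hp h2

theorem totient_two_pow_mul_prod_primesBelow_erase (t : ℕ) :
    ((2 ^ (t + 1) * ∏ q ∈ (n.primesBelow.erase p).erase 2, q).totient : ℝ) * (p - 1) =
      2 ^ t * ∏ q ∈ n.primesBelow, ((q : ℝ) - 1) := by
  rw [totient_two_pow_mul_prod prime_of_mem_primesBelow_erase_erase (notMem_erase 2 _),
    insert_erase h2, ← mul_prod_erase _ _ hp]
  ring

theorem mul_log_le_two_pow_mul_prod_primesBelow_erase (t : ℕ) :
    ((2 ^ (t + 1) * ∏ q ∈ (n.primesBelow.erase p).erase 2, q).totient : ℝ) *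
      ((1 - (p : ℝ)⁻¹) * log n) ≤
        ((2 ^ (t + 1) * ∏ q ∈ (n.primesBelow.erase p).erase 2, q : ℕ) : ℝ) := by
  have hm := Nat.cast_eq_totient_mul_prod (2 ^ (t + 1) * ∏ q ∈ (n.primesBelow.erase p).erase 2, q)
  rw [primeFactors_two_pow_mul_prod prime_of_mem_primesBelow_erase_erase, insert_erase h2] at hm
  rw [hm]
  exact mul_le_mul_of_nonneg_left (mul_log_le_prod_primesBelow_erase hp) (Nat.cast_nonneg _)

end PrimesBelowErase

theorem exists_two_pow_mul_squarefree_totient_le (n : ℕ) (hn : 1093 < n) (x : ℝ)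
    (hx : 4 ^ n ≤ x) :
    ∃ m : ℕ, 0 < m ∧ (m.totient : ℝ) ≤ x ∧
      (∃ t Q : ℕ, 0 < Q ∧ Odd Q ∧ Squarefree Q ∧ m = 2 ^ t * Q) ∧
      10 / 11 * x * log n ≤ m := by
  set F := ∏ q ∈ n.primesBelow, ((q : ℝ) - 1)
  have hF : 0 < F := prod_pos fun q hq => sub_pos.mpr
    (by exact_mod_cast (Nat.prime_of_mem_primesBelow hq).one_lt)
  obtain ⟨t, p, hp, hlo, hhi⟩ := exists_two_pow_div_gridPrimes_mem_Icc (R := x / F)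
    ((one_le_div hF).mpr ((prod_primesBelow_sub_one_le_four_pow n).trans hx))
  obtain ⟨hpp, hp547, hp1093⟩ := prime_and_mem_Icc_of_mem_gridPrimes p hp
  have hp547' : (547 : ℝ) ≤ p := by exact_mod_cast hp547
  have hpn : p ∈ n.primesBelow := Nat.mem_primesBelow.mpr ⟨by omega, hpp⟩
  have h2 : 2 ∈ n.primesBelow.erase p :=
    mem_erase.mpr ⟨by omega, Nat.mem_primesBelow.mpr ⟨by omega, Nat.prime_two⟩⟩
  have hS := @prime_of_mem_primesBelow_erase_erase n p
  have htot : ((2 ^ (t + 1) * ∏ q ∈ (n.primesBelow.erase p).erase 2, q).totient : ℝ) =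
      F * (2 ^ t / (p - 1)) := by
    rw [mul_div_assoc', eq_div_iff (by linarith), mul_comm F]
    exact totient_two_pow_mul_prod_primesBelow_erase hpn h2 t
  have hQ : 0 < ∏ q ∈ (n.primesBelow.erase p).erase 2, q := prod_pos fun q hq => (hS q hq).pos
  refine ⟨_, mul_pos (by positivity) hQ, ?_, ⟨t + 1, _, hQ,
    odd_prod_of_forall_prime hS (notMem_erase 2 _), squarefree_prod_of_forall_prime hS, rfl⟩,
    le_trans ?_ (mul_log_le_two_pow_mul_prod_primesBelow_erase hpn h2 t)⟩
  · rw [htot, ← mul_div_cancel₀ x hF.ne']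
    exact mul_le_mul_of_nonneg_left hhi hF.le
  · have hlogn : 0 ≤ log n := log_nonneg (by exact_mod_cast (by omega : 1 ≤ n))
    have hx0 : 0 ≤ x := (pow_nonneg (by norm_num) n).trans hx
    have hpinv : (p : ℝ)⁻¹ ≤ 1 / 547 := by
      rw [inv_le_comm₀ (by linarith) (by norm_num)]
      simpa using hp547'
    have hφ : 11 / 12 * x ≤ F * (2 ^ t / (p - 1)) := by
      calc 11 / 12 * x = F * (11 / 12 * (x / F)) := by field_simp
        _ ≤ F * (2 ^ t / (p - 1)) := mul_le_mul_of_nonneg_left hlo hF.le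
    rw [htot]
    nlinarith [mul_nonneg hx0 hlogn, mul_le_mul_of_nonneg_right hφ
      (mul_nonneg (by linarith : (0 : ℝ) ≤ 1 - (p : ℝ)⁻¹) hlogn)]

/-- For every `ε > 0` there is `x₀` such that for all `x ≥ x₀` there exists a positive
integer `m` with `φ(m) ≤ x`, `m = 2^t * Q` for some `t ≥ 0` and odd squarefree `Q`,
and `m ≥ ((1/2)·e^γ − ε) · x · log log x`. -/
theorem exists_large_m_two_pow_mul_squarefree (ε : ℝ) (hε : 0 < ε) :
    ∃ x₀ : ℝ, ∀ x : ℝ, x₀ ≤ x → ∃ m : ℕ, 0 < m ∧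
      (Nat.totient m : ℝ) ≤ x ∧
      (∃ t : ℕ, ∃ Q : ℕ, 0 < Q ∧ Odd Q ∧ Squarefree Q ∧ m = 2 ^ t * Q) ∧
      ((1 / 2) * Real.exp Real.eulerMascheroniConstant - ε) * (x * Real.log (Real.log x))
        ≤ (m : ℝ) := by
  refine ⟨max (exp 4096) (exp (exp (2 / ε))), fun x hx => ?_⟩
  have hx0 : 0 < x := (exp_pos _).trans_le ((le_max_left _ _).trans hx)
  have hlogx : 4096 ≤ log x := (le_log_iff_exp_le hx0).mpr ((le_max_left _ _).trans hx)
  have hε2 : 0 < 2 / ε := by positivity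
  have hL : 2 / ε ≤ log (log x) := (le_log_iff_exp_le (by linarith)).mpr
    ((le_log_iff_exp_le hx0).mpr ((le_max_right _ _).trans hx))
  have hn : 1094 ≤ ⌊log x / 2⌋₊ := Nat.le_floor (by norm_num; linarith)
  obtain ⟨m, hm0, htot, hform, hm⟩ := exists_two_pow_mul_squarefree_totient_le _ hn x
    (four_pow_floor_log_div_two_le (by linarith [add_one_le_exp (log x), exp_log hx0]))
  refine ⟨m, hm0, htot, hform, ?_⟩
  have hεL : 2 ≤ ε * log (log x) := by rwa [div_le_iff₀' hε] at hL
  calc (1 / 2 * exp eulerMascheroniConstant - ε) * (x * log (log x))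
      ≤ 10 / 11 * x * (log (log x) - 2) := by
        nlinarith [exp_eulerMascheroniConstant_le, mul_nonneg hx0.le (hε2.le.trans hL)]
    _ ≤ 10 / 11 * x * log ⌊log x / 2⌋₊ := by
        gcongr; exact log_log_sub_two_le_log_floor (by linarith)
    _ ≤ m := hm
end

section
/- For all positive integers m and n, the product Λ_m · Λ_n divides Λ_{mn}, where Λ_k denotes the least common multiple of 1, 2, …, k. -/
/-! `Λ_k` is Mathlib's `Nat.lcmUpto k`. The exponent of a prime `p` in `Λ_k` is `⌊log_p k⌋`
(`Nat.factorization_lcmUpto`), and `p ^ ⌊log_p m⌋ * p ^ ⌊log_p n⌋ ≤ m * n` gives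
`⌊log_p m⌋ + ⌊log_p n⌋ ≤ ⌊log_p (m * n)⌋`. -/

namespace Nat

theorem log_add_log_le_log_mul {b m n : ℕ} (hb : 1 < b) (hm : m ≠ 0) (hn : n ≠ 0) :
    log b m + log b n ≤ log b (m * n) :=
  le_log_of_pow_le hb <| by
    rw [pow_add]
    exact Nat.mul_le_mul (pow_log_le_self b hm) (pow_log_le_self b hn)

theorem lcmUpto_mul_dvd {m n : ℕ} (hm : m ≠ 0) (hn : n ≠ 0) :
    lcmUpto m * lcmUpto n ∣ lcmUpto (m * n) := by
  rw [← factorization_prime_le_iff_dvd (mul_ne_zero (lcmUpto_ne_zero m) (lcmUpto_ne_zero n))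
    (lcmUpto_ne_zero _)]
  intro p hp
  rw [factorization_mul (lcmUpto_ne_zero m) (lcmUpto_ne_zero n), Finsupp.add_apply,
    factorization_lcmUpto m hp, factorization_lcmUpto n hp, factorization_lcmUpto _ hp]
  exact log_add_log_le_log_mul hp.one_lt hm hn

end Nat

/-- For all positive integers `m` and `n`, `lcm(1,…,m) * lcm(1,…,n)` divides
`lcm(1,…,m*n)`. -/
theorem lcm_range_mul_dvd (m n : ℕ) (hm : 0 < m) (hn : 0 < n) :
    (Finset.Icc 1 m).lcm id * (Finset.Icc 1 n).lcm id ∣ (Finset.Icc 1 (m * n)).lcm id :=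
  Nat.lcmUpto_mul_dvd hm.ne' hn.ne'
end

section
/- Let m, n, a ≥ 1 be integers, and let Φ_k denote the k-th cyclotomic polynomial. If gcd(Φ_m(a), Φ_n(a)) > 1, then m/n is an integer power of a prime, i.e., there exist a prime number p and an integer k (possibly negative) such that m/n = p^k. -/
/-!
A prime `q` dividing both `Φ_m(a)` and `Φ_n(a)` makes `a` a root of `Φ_m` and `Φ_n` over
`ZMod q`. Writing `m = q ^ i * m'` with `q ∤ m'`, a root of `Φ_m` in characteristic `q` is
exactly a primitive `m'`-th root of unity, so the order of `a` in `ZMod q` equals both `m'`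
and `n'`; hence `m / n = q ^ (i - j)`.
-/

open Polynomial

theorem isRoot_cyclotomic_zmod_iff_dvd_eval (q N : ℕ) (a : ℤ) :
    (cyclotomic N (ZMod q)).IsRoot (a : ZMod q) ↔ (q : ℤ) ∣ (cyclotomic N ℤ).eval a := by
  rw [IsRoot, ← map_cyclotomic_int N (ZMod q), eval_intCast_map, eq_intCast,
    ZMod.intCast_zmod_eq_zero_iff_dvd, Int.cast_id]

section CharP

variable {R : Type*} [CommRing R] [IsDomain R] {p : ℕ} [Fact p.Prime] [CharP R p]

theorem isPrimitiveRoot_ordCompl_of_isRoot_cyclotomic {n : ℕ} (hn : n ≠ 0) {μ : R}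
    (h : (cyclotomic n R).IsRoot μ) : IsPrimitiveRoot μ (ordCompl[p] n) := by
  have : NeZero ((ordCompl[p] n : ℕ) : R) :=
    ⟨fun h0 => Nat.not_dvd_ordCompl Fact.out hn ((CharP.cast_eq_zero_iff R p _).mp h0)⟩
  rw [← Nat.ordProj_mul_ordCompl_eq_self n p] at h
  exact isRoot_cyclotomic_prime_pow_mul_iff_of_charP.mp h

theorem ordCompl_eq_of_isRoot_cyclotomic {m n : ℕ} (hm : m ≠ 0) (hn : n ≠ 0) {μ : R}
    (hμm : (cyclotomic m R).IsRoot μ) (hμn : (cyclotomic n R).IsRoot μ) :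
    ordCompl[p] m = ordCompl[p] n :=
  (isPrimitiveRoot_ordCompl_of_isRoot_cyclotomic hm hμm).unique
    (isPrimitiveRoot_ordCompl_of_isRoot_cyclotomic hn hμn)

end CharP

theorem Nat.cast_div_eq_zpow_of_ordCompl_eq {p m n : ℕ} (hp : p ≠ 0) (hn : n ≠ 0)
    (h : ordCompl[p] m = ordCompl[p] n) :
    (m : ℚ) / n = (p : ℚ) ^ ((m.factorization p : ℤ) - n.factorization p) := by
  obtain ⟨c, hc_m, hc_n⟩ : ∃ c, ordCompl[p] m = c ∧ ordCompl[p] n = c := ⟨_, h, rfl⟩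
  have hc : (c : ℚ) ≠ 0 := by
    rw [← hc_n]
    exact_mod_cast (Nat.ordCompl_pos p hn).ne'
  conv_lhs => rw [← Nat.ordProj_mul_ordCompl_eq_self m p, ← Nat.ordProj_mul_ordCompl_eq_self n p,
    hc_m, hc_n]
  rw [zpow_sub₀ (by exact_mod_cast hp)]
  push_cast
  exact mul_div_mul_right _ _ hc

theorem cyclotomic_gcd_gt_one_ratio_prime_pow_general (m n : ℕ) (a : ℤ)
    (hm : 1 ≤ m) (hn : 1 ≤ n)
    (h : 1 < Int.gcd ((Polynomial.cyclotomic m ℤ).eval a)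
      ((Polynomial.cyclotomic n ℤ).eval a)) :
    ∃ p : ℕ, p.Prime ∧ ∃ k : ℤ, (m : ℚ) / (n : ℚ) = (p : ℚ) ^ k := by
  obtain ⟨q, hq, hq_dvd⟩ := Nat.exists_prime_and_dvd h.ne'
  have := Fact.mk hq
  have hq_dvd' : (q : ℤ) ∣ _ := Int.natCast_dvd_natCast.mpr hq_dvd
  have hroot_m := (isRoot_cyclotomic_zmod_iff_dvd_eval q m a).mpr
    (hq_dvd'.trans (Int.gcd_dvd_left _ _))
  have hroot_n := (isRoot_cyclotomic_zmod_iff_dvd_eval q n a).mpr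
    (hq_dvd'.trans (Int.gcd_dvd_right _ _))
  have hcompl := ordCompl_eq_of_isRoot_cyclotomic (p := q) (by omega) (by omega) hroot_m hroot_n
  exact ⟨q, hq, _, Nat.cast_div_eq_zpow_of_ordCompl_eq hq.ne_zero (by omega) hcompl⟩

/-- If `gcd(Φ_m(a), Φ_n(a)) > 1` for integers `m, n, a ≥ 1`, then `m / n` is an
integer power of a prime: `m / n = p ^ k` for some prime `p` and integer `k`. -/
theorem cyclotomic_gcd_gt_one_ratio_prime_pow (m n : ℕ) (a : ℤ)
    (hm : 1 ≤ m) (hn : 1 ≤ n) (ha : 1 ≤ a)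
    (h : 1 < Int.gcd ((Polynomial.cyclotomic m ℤ).eval a)
      ((Polynomial.cyclotomic n ℤ).eval a)) :
    ∃ p : ℕ, p.Prime ∧ ∃ k : ℤ, (m : ℚ) / (n : ℚ) = (p : ℚ) ^ k :=
  cyclotomic_gcd_gt_one_ratio_prime_pow_general m n a hm hn h
end

section
/- Let b ≥ 2 and a ≥ 1 be integers, let t ≥ 0 be an integer, and let d₁ and d₂ be distinct odd squarefree positive integers whose Möbius function values agree, μ(d₁) = μ(d₂). Then the values of the cyclotomic polynomials Φ_{2^t · d₁}(a) and Φ_{2^t · d₂}(a) are coprime, i.e., gcd(Φ_{2^t d₁}(a), Φ_{2^t d₂}(a)) = 1. -/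
/-!
A prime `p` dividing `Φ_m(a)` and `Φ_n(a)` makes `a mod p` a primitive root of unity of order
both `m` and `n` with their `p`-parts removed, so these `p`-free parts agree. For `m = k d₁`,
`n = k d₂` this says `d₁` and `d₂` have the same `p`-free part; being squarefree they differ
by at most one factor `p`, and one factor `p` flips the sign of `μ`.
-/

open Polynomial ArithmeticFunction
open scoped ArithmeticFunction.Moebius

theorem isPrimitiveRoot_ordCompl_of_isRoot_cyclotomic_s8 {R : Type*} [CommRing R] [IsDomain R]
    {p : ℕ} [Fact p.Prime] [CharP R p] {n : ℕ} (hn : n ≠ 0) {x : R}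
    (hx : (cyclotomic n R).IsRoot x) : IsPrimitiveRoot x (ordCompl[p] n) := by
  have : NeZero ((ordCompl[p] n : ℕ) : R) :=
    ⟨by rw [Ne, CharP.cast_eq_zero_iff R p]; exact Nat.not_dvd_ordCompl Fact.out hn⟩
  rw [← Nat.ordProj_mul_ordCompl_eq_self n p] at hx
  exact isRoot_cyclotomic_prime_pow_mul_iff_of_charP.mp hx

theorem isPrimitiveRoot_ordCompl_of_dvd_cyclotomic_eval {p : ℕ} [Fact p.Prime] {n : ℕ}
    (hn : n ≠ 0) {a : ℤ} (hdvd : (p : ℤ) ∣ (cyclotomic n ℤ).eval a) :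
    IsPrimitiveRoot (a : ZMod p) (ordCompl[p] n) := by
  apply isPrimitiveRoot_ordCompl_of_isRoot_cyclotomic_s8 hn
  rw [IsRoot.def, ← map_cyclotomic_int, eval_map]
  exact (eval₂_at_apply _ a).trans ((ZMod.intCast_zmod_eq_zero_iff_dvd _ p).mpr hdvd)

theorem ordCompl_eq_of_dvd_cyclotomic_eval {p : ℕ} (hp : p.Prime) {m n : ℕ} (hm : m ≠ 0)
    (hn : n ≠ 0) {a : ℤ} (hpm : (p : ℤ) ∣ (cyclotomic m ℤ).eval a)
    (hpn : (p : ℤ) ∣ (cyclotomic n ℤ).eval a) : ordCompl[p] m = ordCompl[p] n := by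
  have := Fact.mk hp
  rw [(isPrimitiveRoot_ordCompl_of_dvd_cyclotomic_eval hm hpm).eq_orderOf,
    (isPrimitiveRoot_ordCompl_of_dvd_cyclotomic_eval hn hpn).eq_orderOf]

theorem Squarefree.eq_ordCompl_or_eq_prime_mul_ordCompl {p d : ℕ} (hd : Squarefree d) :
    d = ordCompl[p] d ∨ d = p * ordCompl[p] d := by
  rcases Nat.le_one_iff_eq_zero_or_eq_one.mp (hd.natFactorization_le_one p) with hk | hk
  · exact .inl (by simp [hk])
  · exact .inr (by simpa [hk] using (Nat.ordProj_mul_ordCompl_eq_self d p).symm)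

theorem moebius_prime_mul {p c : ℕ} (hp : p.Prime) (hpc : ¬ p ∣ c) : μ (p * c) = -μ c := by
  rw [isMultiplicative_moebius.map_mul_of_coprime (hp.coprime_iff_not_dvd.mpr hpc),
    moebius_apply_prime hp, neg_one_mul]

theorem Squarefree.eq_of_moebius_eq_of_ordCompl_eq {p d₁ d₂ : ℕ} (hp : p.Prime)
    (hd₁ : Squarefree d₁) (hd₂ : Squarefree d₂) (hμ : μ d₁ = μ d₂)
    (hc : ordCompl[p] d₁ = ordCompl[p] d₂) : d₁ = d₂ := by
  set c := ordCompl[p] d₂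
  have hpc : ¬ p ∣ c := Nat.not_dvd_ordCompl hp hd₂.ne_zero
  have hμc : μ c ≠ 0 :=
    moebius_ne_zero_iff_squarefree.mpr (hd₂.squarefree_of_dvd (Nat.ordCompl_dvd d₂ p))
  obtain e₁ | e₁ : d₁ = c ∨ d₁ = p * c := hc ▸ hd₁.eq_ordCompl_or_eq_prime_mul_ordCompl <;>
  obtain e₂ | e₂ : d₂ = c ∨ d₂ = p * c := hd₂.eq_ordCompl_or_eq_prime_mul_ordCompl
  · rw [e₁, e₂]
  · rw [e₁, e₂, moebius_prime_mul hp hpc] at hμ; omega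
  · rw [e₁, e₂, moebius_prime_mul hp hpc] at hμ; omega
  · rw [e₁, e₂]

theorem Int.gcd_cyclotomic_eval_mul_eq_one {m d₁ d₂ : ℕ} (hm : m ≠ 0) (hne : d₁ ≠ d₂)
    (hsf₁ : Squarefree d₁) (hsf₂ : Squarefree d₂) (hμ : μ d₁ = μ d₂) (a : ℤ) :
    Int.gcd ((cyclotomic (m * d₁) ℤ).eval a) ((cyclotomic (m * d₂) ℤ).eval a) = 1 := by
  by_contra h
  obtain ⟨p, hp, hpd⟩ := Nat.exists_prime_and_dvd h
  have hpd' := Int.natCast_dvd_natCast.mpr hpd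
  have hc := ordCompl_eq_of_dvd_cyclotomic_eval hp (mul_ne_zero hm hsf₁.ne_zero)
    (mul_ne_zero hm hsf₂.ne_zero) (hpd'.trans (Int.gcd_dvd_left _ _))
    (hpd'.trans (Int.gcd_dvd_right _ _))
  rw [Nat.ordCompl_mul, Nat.ordCompl_mul] at hc
  exact hne (hsf₁.eq_of_moebius_eq_of_ordCompl_eq hp hsf₂ hμ
    (Nat.eq_of_mul_eq_mul_left (Nat.ordCompl_pos p hm) hc))

theorem cyclotomic_values_coprime_general (a : ℤ) (t : ℕ)
    (d₁ d₂ : ℕ) (hne : d₁ ≠ d₂)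
    (hsf₁ : Squarefree d₁) (hsf₂ : Squarefree d₂)
    (hμ : ArithmeticFunction.moebius d₁ = ArithmeticFunction.moebius d₂) :
    Int.gcd ((Polynomial.cyclotomic (2 ^ t * d₁) ℤ).eval a)
      ((Polynomial.cyclotomic (2 ^ t * d₂) ℤ).eval a) = 1 :=
  Int.gcd_cyclotomic_eval_mul_eq_one (pow_ne_zero t two_ne_zero) hne hsf₁ hsf₂ hμ a

/-- Let `b ≥ 2` and `a ≥ 1` be integers, `t ≥ 0`, and let `d₁ ≠ d₂` be odd squarefree
positive integers with `μ(d₁) = μ(d₂)`. Then `Φ_{2^t d₁}(a)` and `Φ_{2^t d₂}(a)`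
are coprime. -/
theorem cyclotomic_values_coprime (b a : ℤ) (hb : 2 ≤ b) (ha : 1 ≤ a) (t : ℕ)
    (d₁ d₂ : ℕ) (hd₁ : 0 < d₁) (hd₂ : 0 < d₂) (hne : d₁ ≠ d₂)
    (hodd₁ : Odd d₁) (hodd₂ : Odd d₂)
    (hsf₁ : Squarefree d₁) (hsf₂ : Squarefree d₂)
    (hμ : ArithmeticFunction.moebius d₁ = ArithmeticFunction.moebius d₂) :
    Int.gcd ((Polynomial.cyclotomic (2 ^ t * d₁) ℤ).eval a)
      ((Polynomial.cyclotomic (2 ^ t * d₂) ℤ).eval a) = 1 :=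
  cyclotomic_values_coprime_general a t d₁ d₂ hne hsf₁ hsf₂ hμ
end

section
/- Let b ≥ 2 be an integer and let m and q be positive integers. Then the sum of the base-b digits of (b^m − 1)·q is at least m, i.e., s_b((b^m − 1)q) ≥ m. -/
open Nat

/-- Digit sum of successor increases by at most one. -/
lemma sum_digits_succ_le (b : ℕ) (hb : 2 ≤ b) :
    ∀ u : ℕ, (Nat.digits b (u + 1)).sum ≤ (Nat.digits b u).sum + 1 := by
  intro u
  induction u using Nat.strong_induction_on with
  | _ u ih =>
    rcases Nat.eq_zero_or_pos u with rfl | hu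
    · rw [Nat.digits_of_lt b 1 one_ne_zero (by omega)]
      simp
    have h1 : Nat.digits b (u + 1) = (u+1) % b :: Nat.digits b ((u+1) / b) :=
      Nat.digits_def' (by omega : 1 < b) (by omega)
    have h2 : Nat.digits b u = u % b :: Nat.digits b (u / b) :=
      Nat.digits_def' (by omega : 1 < b) hu
    rw [h1, h2, List.sum_cons, List.sum_cons]
    have hmod := Nat.mod_lt u (show 0 < b by omega)
    have haddmod : (u + 1) % b = (u % b + 1) % b := by
      conv_lhs => rw [Nat.add_mod, Nat.mod_eq_of_lt (show 1 < b by omega)]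
    by_cases hc : u % b = b - 1
    · have hmod1 : (u + 1) % b = 0 := by
        rw [haddmod, hc, show b - 1 + 1 = b from by omega, Nat.mod_self]
      have hdvd : b ∣ (u + 1) := Nat.dvd_of_mod_eq_zero hmod1
      have hdiv1 : (u + 1) / b = u / b + 1 := by
        rw [Nat.succ_div, if_pos hdvd]
      have hlt : u / b < u := Nat.div_lt_self hu (by omega)
      have := ih (u / b) hlt
      rw [hmod1, hdiv1]
      omega
    · have hmod1 : (u + 1) % b = u % b + 1 := by
        rw [haddmod, Nat.mod_eq_of_lt (by omega)]
      have hdiv1 : (u + 1) / b = u / b := by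
        rw [Nat.succ_div, if_neg (fun hdvd => by
          have := Nat.eq_zero_of_dvd_of_lt hdvd
          have h0 := Nat.mod_eq_zero_of_dvd hdvd
          omega)]
        omega
      rw [hmod1, hdiv1]
      omega

/-- Subadditivity of the digit sum. -/
lemma sum_digits_add_le (b : ℕ) (hb : 2 ≤ b) :
    ∀ n x y : ℕ, x + y = n →
      (Nat.digits b (x + y)).sum ≤ (Nat.digits b x).sum + (Nat.digits b y).sum := by
  intro n
  induction n using Nat.strong_induction_on with
  | _ n ih =>
    intro x y hxy
    rcases Nat.eq_zero_or_pos x with rfl | hx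
    · simp
    rcases Nat.eq_zero_or_pos y with rfl | hy
    · simp
    have hn : 0 < n := by omega
    have hb1 : 1 < b := by omega
    have hbpos : 0 < b := by omega
    rw [Nat.digits_def' hb1 (by omega : 0 < x + y),
        Nat.digits_def' hb1 hx, Nat.digits_def' hb1 hy,
        List.sum_cons, List.sum_cons, List.sum_cons]
    have hxm := Nat.mod_lt x hbpos
    have hym := Nat.mod_lt y hbpos
    have hdivlt : x / b + y / b < n := by
      have h1 : x / b < x := Nat.div_lt_self hx hb1
      have h2 : y / b < y := Nat.div_lt_self hy hb1
      omega
    have hih := ih (x / b + y / b) (by omega) (x / b) (y / b) rfl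
    have haddmod : (x + y) % b = (x % b + y % b) % b := Nat.add_mod x y b
    have hadddiv : (x + y) / b = x / b + y / b + if b ≤ x % b + y % b then 1 else 0 :=
      Nat.add_div hbpos
    by_cases hc : x % b + y % b < b
    · rw [haddmod, Nat.mod_eq_of_lt hc] at *
      rw [hadddiv, if_neg (by omega), add_zero]
      omega
    · have hmod : (x + y) % b = x % b + y % b - b := by
        rw [haddmod, Nat.mod_eq_sub_mod (by omega), Nat.mod_eq_of_lt (by omega)]
      have hdiv : (x + y) / b = x / b + y / b + 1 := by
        rw [hadddiv, if_pos (by omega)]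
      rw [hmod, hdiv]
      have := sum_digits_succ_le b hb (x / b + y / b)
      omega

/-- Splitting the digit sum at position `m`. -/
lemma sum_digits_split (b m a c : ℕ) (hb : 2 ≤ b) (hc : c < b ^ m) :
    (Nat.digits b (c + b ^ m * a)).sum = (Nat.digits b c).sum + (Nat.digits b a).sum := by
  have hb1 : 1 < b := by omega
  rcases Nat.eq_zero_or_pos a with rfl | ha
  · simp
  have hlen : (Nat.digits b c).length ≤ m := by
    rcases Nat.eq_zero_or_pos c with rfl | hc0
    · simp
    · rw [Nat.digits_len b c hb1 (by omega)]
      have := Nat.log_lt_of_lt_pow (by omega : c ≠ 0) hc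
      omega
  have key := Nat.digits_append_zeroes_append_digits
    (b := b) (k := m - (Nat.digits b c).length) (m := a) (n := c) hb1 ha
  rw [show (Nat.digits b c).length + (m - (Nat.digits b c).length) = m from by omega] at key
  rw [← key]
  simp

/-- The digit sum of `b^m - 1` is `m * (b - 1)`. -/
lemma sum_digits_pow_sub_one (b : ℕ) (hb : 2 ≤ b) :
    ∀ m : ℕ, (Nat.digits b (b ^ m - 1)).sum = m * (b - 1) := by
  intro m
  induction m with
  | zero => simp
  | succ m ih =>
    have hb1 : 1 < b := by omega
    have hbm : 1 ≤ b ^ m := Nat.one_le_pow _ _ (by omega)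
    have hpos : 0 < b ^ (m + 1) - 1 := by
      have : b ^ m ≤ b ^ (m+1) := Nat.pow_le_pow_right (by omega) (by omega)
      have : 2 ≤ b ^ (m+1) := le_trans (by omega : 2 ≤ b) (by
        calc b = b ^ 1 := (pow_one b).symm
        _ ≤ b ^ (m+1) := Nat.pow_le_pow_right (by omega) (by omega))
      omega
    have heq : b ^ (m + 1) - 1 = (b - 1) + b * (b ^ m - 1) := by
      have : b ^ (m+1) = b * b ^ m := by ring
      rw [this]
      have := Nat.mul_le_mul_left b hbm
      rw [Nat.mul_sub]
      omega
    rw [Nat.digits_def' hb1 hpos]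
    have hmod : (b ^ (m + 1) - 1) % b = b - 1 := by
      rw [heq]
      rw [Nat.add_mul_mod_self_left]
      exact Nat.mod_eq_of_lt (by omega)
    have hdiv : (b ^ (m + 1) - 1) / b = b ^ m - 1 := by
      rw [heq, Nat.add_mul_div_left _ _ (by omega : 0 < b),
        Nat.div_eq_of_lt (by omega)]
      omega
    rw [List.sum_cons, hmod, hdiv, ih]
    ring

/-- For `b ≥ 2` and positive integers `m`, `q`, the sum of the base-`b` digits of
`(b^m − 1) * q` is at least `m`. -/
theorem sum_digits_mul_pred_pow (b m q : ℕ) (hb : 2 ≤ b) (hm : 0 < m) (hq : 0 < q) :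
    m ≤ (Nat.digits b ((b ^ m - 1) * q)).sum := by
  induction q using Nat.strong_induction_on with
  | _ q ih =>
  have hb1 : 1 < b := by omega
  have hB : 2 ≤ b ^ m := by
    calc (2:ℕ) ≤ b := hb
    _ = b ^ 1 := (pow_one b).symm
    _ ≤ b ^ m := Nat.pow_le_pow_right (by omega) hm
  set B := b ^ m with hBdef
  by_cases hq1 : q < B
  · -- small case: (B-1)*q = (B - q) + B * (q - 1)
    have heq : (B - 1) * q = (B - q) + B * (q - 1) := by
      rw [Nat.sub_mul, Nat.mul_sub, one_mul, mul_one]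
      have : B ≤ B * q := Nat.le_mul_of_pos_right B hq
      omega
    rw [heq, sum_digits_split b m (q-1) (B - q) hb (by omega)]
    have hsub := sum_digits_add_le b hb ((B - q) + (q - 1)) (B - q) (q - 1) rfl
    have hval : (B - q) + (q - 1) = B - 1 := by omega
    rw [hval] at hsub
    have hsum := sum_digits_pow_sub_one b hb m
    rw [← hBdef] at hsum
    have : m ≤ m * (b - 1) := Nat.le_mul_of_pos_right m (by omega)
    omega
  · push_neg at hq1
    set q₁ := q / B with hq1def
    set r := q % B with hrdef
    have hqdecomp : q = B * q₁ + r := (Nat.div_add_mod q B).symm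
    have hrlt : r < B := Nat.mod_lt q (by omega)
    have hq₁pos : 1 ≤ q₁ := (Nat.one_le_div_iff (by omega)).mpr hq1
    have hBq₁ : 2 * q₁ ≤ B * q₁ := Nat.mul_le_mul_right q₁ hB
    rcases Nat.eq_zero_or_pos r with hr0 | hrpos
    · -- r = 0 : (B-1)*q = 0 + B * ((B-1)*q₁)
      have heq : (B - 1) * q = 0 + B * ((B - 1) * q₁) := by
        rw [zero_add, hqdecomp, hr0]
        ring
      rw [heq, sum_digits_split b m ((B-1)*q₁) 0 hb (by omega)]
      have hlt : q₁ < q := by omega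
      have := ih q₁ hlt (by omega)
      simpa using le_trans this (by simp)
    · -- r > 0 : (B-1)*q = (B - r) + B * (q - q₁ - 1)
      have hqbig : q₁ + 1 < q := by omega
      have heq : (B - 1) * q = (B - r) + B * (q - q₁ - 1) := by
        zify [show 1 ≤ B by omega, show r ≤ B by omega,
          show q₁ + 1 ≤ q by omega, show q₁ ≤ q by omega,
          show (1:ℕ) ≤ q - q₁ by omega]
        have hz : (q : ℤ) = B * q₁ + r := by exact_mod_cast hqdecomp
        nlinarith [hz]
      rw [heq, sum_digits_split b m (q - q₁ - 1) (B - r) hb (by omega)]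
      have hsub := sum_digits_add_le b hb ((B - r) + (q - q₁ - 1)) (B - r) (q - q₁ - 1) rfl
      have hval : (B - r) + (q - q₁ - 1) = (B - 1) * (q₁ + 1) := by
        zify [show 1 ≤ B by omega, show r ≤ B by omega,
          show q₁ + 1 ≤ q by omega, show q₁ ≤ q by omega,
          show (1:ℕ) ≤ q - q₁ by omega]
        have hz : (q : ℤ) = B * q₁ + r := by exact_mod_cast hqdecomp
        nlinarith [hz]
      rw [hval] at hsub
      have := ih (q₁ + 1) hqbig (by omega)
      omega
end

section
/- Let p₁ < p₂ < ⋯ be the increasing sequence of all prime numbers, and for real x ≥ 2 let s = s(x) be the greatest positive integer such that (p₁ − 1)(p₂ − 1)⋯(p_s − 1) ≤ √x. Then p_s > (1/(4 log 4)) · log x, where log denotes the natural logarithm. -/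
lemma nth_prime_le_two_mul (k : ℕ) :
    Nat.nth Nat.Prime (k + 1) ≤ 2 * Nat.nth Nat.Prime k := by
  have hp := Nat.prime_nth_prime k
  obtain ⟨q, hq, hlt, hle⟩ := Nat.exists_prime_lt_and_le_two_mul (Nat.nth Nat.Prime k)
    hp.pos.ne'
  have hinf : (setOf Nat.Prime).Infinite := Nat.infinite_setOf_prime
  have hq' : Nat.nth Nat.Prime (Nat.count Nat.Prime q) = q := Nat.nth_count hq
  have : Nat.nth Nat.Prime k < Nat.nth Nat.Prime (Nat.count Nat.Prime q) := by
    rw [hq']; exact hlt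
  have hk : k + 1 ≤ Nat.count Nat.Prime q := (Nat.nth_lt_nth hinf).1 this
  calc Nat.nth Nat.Prime (k + 1) ≤ Nat.nth Nat.Prime (Nat.count Nat.Prime q) :=
        (Nat.nth_le_nth hinf).2 hk
    _ = q := hq'
    _ ≤ 2 * Nat.nth Nat.Prime k := hle

lemma prod_nth_prime_le (s : ℕ) :
    (∏ i ∈ Finset.range (s + 1), Nat.nth Nat.Prime i) ≤ 4 ^ Nat.nth Nat.Prime s := by
  have hsub : (Finset.range (s + 1)).image (Nat.nth Nat.Prime) ⊆
      Finset.filter Nat.Prime (Finset.range (Nat.nth Nat.Prime s + 1)) := by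
    intro q hq
    simp only [Finset.mem_image, Finset.mem_range] at hq
    obtain ⟨i, hi, rfl⟩ := hq
    simp only [Finset.mem_filter, Finset.mem_range]
    refine ⟨Nat.lt_succ_of_le ?_, Nat.prime_nth_prime i⟩
    exact (Nat.nth_le_nth Nat.infinite_setOf_prime).2 (Nat.lt_succ_iff.1 hi)
  have hinj : Set.InjOn (Nat.nth Nat.Prime) (Finset.range (s + 1)) := fun a _ b _ h =>
    Nat.nth_injective Nat.infinite_setOf_prime h
  calc (∏ i ∈ Finset.range (s + 1), Nat.nth Nat.Prime i)
      = ∏ q ∈ (Finset.range (s + 1)).image (Nat.nth Nat.Prime), q :=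
        by rw [Finset.prod_image (fun a ha b hb h => hinj ha hb h)]
    _ ≤ ∏ q ∈ Finset.filter Nat.Prime (Finset.range (Nat.nth Nat.Prime s + 1)), q := by
        refine Finset.prod_le_prod_of_subset_of_one_le' hsub ?_
        intro q hq _
        exact (Finset.mem_filter.1 hq).2.one_lt.le
    _ = primorial (Nat.nth Nat.Prime s) := rfl
    _ ≤ 4 ^ Nat.nth Nat.Prime s := primorial_le_4_pow _

/-- Let `p₀ < p₁ < ⋯` be the primes (so `Nat.nth Nat.Prime i` is the `(i+1)`-st prime)
and for `x ≥ 2` let `s ≥ 1` be the greatest positive integer with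
`∏_{i < s} (pᵢ − 1) ≤ √x`.  Then the `s`-th prime exceeds `(1/(4 log 4)) · log x`. -/
theorem nth_prime_gt_of_max_prod (x : ℝ) (hx : 2 ≤ x) (s : ℕ) (hs : 0 < s)
    (hle : (∏ i ∈ Finset.range s, ((Nat.nth Nat.Prime i : ℝ) - 1)) ≤ Real.sqrt x)
    (hmax : ∀ s' : ℕ, 0 < s' →
      (∏ i ∈ Finset.range s', ((Nat.nth Nat.Prime i : ℝ) - 1)) ≤ Real.sqrt x → s' ≤ s) :
    (1 / (4 * Real.log 4)) * Real.log x < (Nat.nth Nat.Prime (s - 1) : ℝ) := by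
  have hx0 : (0:ℝ) < x := lt_of_lt_of_le two_pos hx
  -- maximality: product over range (s+1) exceeds √x
  have hgt : Real.sqrt x < ∏ i ∈ Finset.range (s + 1), ((Nat.nth Nat.Prime i : ℝ) - 1) := by
    by_contra h
    push_neg at h
    exact absurd (hmax (s + 1) (Nat.succ_pos s) h) (by omega)
  -- each factor is at most the prime itself
  have hprod_le : (∏ i ∈ Finset.range (s + 1), ((Nat.nth Nat.Prime i : ℝ) - 1)) ≤
      ∏ i ∈ Finset.range (s + 1), (Nat.nth Nat.Prime i : ℝ) := by
    refine Finset.prod_le_prod (fun i _ => ?_) (fun i _ => by linarith)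
    have := (Nat.prime_nth_prime i).two_le
    have : (2:ℝ) ≤ (Nat.nth Nat.Prime i : ℝ) := by exact_mod_cast this
    linarith
  have hcast : (∏ i ∈ Finset.range (s + 1), (Nat.nth Nat.Prime i : ℝ)) =
      ((∏ i ∈ Finset.range (s + 1), Nat.nth Nat.Prime i : ℕ) : ℝ) := by
    push_cast; ring
  have h4 : ((∏ i ∈ Finset.range (s + 1), Nat.nth Nat.Prime i : ℕ) : ℝ) ≤
      (4:ℝ) ^ Nat.nth Nat.Prime s := by
    have := prod_nth_prime_le s
    calc ((∏ i ∈ Finset.range (s + 1), Nat.nth Nat.Prime i : ℕ) : ℝ)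
        ≤ ((4 ^ Nat.nth Nat.Prime s : ℕ) : ℝ) := by exact_mod_cast this
      _ = (4:ℝ) ^ Nat.nth Nat.Prime s := by push_cast; ring
  have hsqrt : Real.sqrt x < (4:ℝ) ^ Nat.nth Nat.Prime s := by
    calc Real.sqrt x < _ := hgt
      _ ≤ _ := hprod_le
      _ = _ := hcast
      _ ≤ _ := h4
  have hlog : Real.log x / 2 < (Nat.nth Nat.Prime s : ℝ) * Real.log 4 := by
    have := Real.log_lt_log (Real.sqrt_pos.2 hx0) hsqrt
    rwa [Real.log_sqrt hx0.le, Real.log_pow] at this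
  -- Bertrand: p_s ≤ 2 p_{s-1}
  have hb : (Nat.nth Nat.Prime s : ℝ) ≤ 2 * (Nat.nth Nat.Prime (s - 1) : ℝ) := by
    have : Nat.nth Nat.Prime (s - 1 + 1) ≤ 2 * Nat.nth Nat.Prime (s - 1) :=
      nth_prime_le_two_mul (s - 1)
    rw [Nat.sub_add_cancel hs] at this
    exact_mod_cast this
  have h4pos : (0:ℝ) < Real.log 4 := Real.log_pos (by norm_num)
  have key : Real.log x < 4 * Real.log 4 * (Nat.nth Nat.Prime (s - 1) : ℝ) := by
    nlinarith [hlog, hb, h4pos]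
  rw [div_mul_eq_mul_div, one_mul, div_lt_iff₀ (by positivity)]
  linarith [key]
end
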